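/- Let B₁, B₂ be Hermitian n×n complex matrices and let J₃ be the 3×3 Jordan block with zero eigenvalues, with Re(J₃) = (J₃ + J₃ᴴ)/2 and Im(J₃) = (J₃ − J₃ᴴ)/(2i). Then I_n ⊗ I₃ + B₁ ⊗ Re(J₃) + B₂ ⊗ Im(J₃) is positive semidefinite if and only if B₁² + B₂² ≤ 2·I_n. -/

import Mathlib

/-!
With `D = (B₁ - i B₂) / 2` the matrix is `M = 1 + D ⊗ J₃ + (D ⊗ J₃)ᴴ`, which in the `Fin 3`
coordinate is the block-tridiagonal matrix `[[1, D, 0], [Dᴴ, 1, D], [0, Dᴴ, 1]]`. Eliminating the two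
outer blocks writes `M` as two Gram matrices plus `S ⊗ E₁₁`, where `S = 1 - DᴴD - DDᴴ` is the Schur
complement; conversely, compressing `M` to the range of `Y = (-D, 1, -Dᴴ)ᵀ` gives `YᴴMY = S`.
Hence `M ≥ 0 ↔ S ≥ 0`, and `2 S = 2 - B₁² - B₂²` for Hermitian `B₁`, `B₂`.
-/

open Matrix Kronecker
open scoped ComplexOrder

/-- The 3×3 Jordan block with zero eigenvalues. -/
def J₃ : Matrix (Fin 3) (Fin 3) ℂ := !![0, 1, 0; 0, 0, 1; 0, 0, 0]

namespace Matrix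

variable {α l m n p : Type*}

theorem sub_kronecker [NonUnitalNonAssocRing α] (A₁ A₂ : Matrix l m α) (B : Matrix n p α) :
    (A₁ - A₂) ⊗ₖ B = A₁ ⊗ₖ B - A₂ ⊗ₖ B := by
  ext; simp [sub_mul]

theorem kronecker_sub [NonUnitalNonAssocRing α] (A : Matrix l m α) (B₁ B₂ : Matrix n p α) :
    A ⊗ₖ (B₁ - B₂) = A ⊗ₖ B₁ - A ⊗ₖ B₂ := by
  ext; simp [mul_sub]

theorem submatrix_kronecker_single_self [MulZeroOneClass α] [DecidableEq n]
    (A : Matrix l m α) (k : n) :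
    (A ⊗ₖ single k k 1).submatrix (·, k) (·, k) = A := by
  ext; simp

theorem posSemidef_single_one {𝕜 : Type*} [RCLike 𝕜] [Fintype n] [DecidableEq n] (k : n) :
    (single k k (1 : 𝕜)).PosSemidef := by
  rw [← diagonal_single]
  exact posSemidef_diagonal_iff.mpr fun i => by by_cases h : i = k <;> simp [h]

theorem posSemidef_smul_iff {𝕜 : Type*} [RCLike 𝕜] [Fintype n] {A : Matrix n n 𝕜} {c : 𝕜}
    (hc : 0 < c) :
    (c • A).PosSemidef ↔ A.PosSemidef := by
  refine ⟨fun h => ?_, fun h => h.smul hc.le⟩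
  simpa [smul_smul, inv_mul_cancel₀ hc.ne'] using h.smul (inv_nonneg.mpr hc.le)

theorem one_fin_three_eq_sum_single [Semiring α] :
    (1 : Matrix (Fin 3) (Fin 3) α) = single 0 0 1 + single 1 1 1 + single 2 2 1 := by
  ext i j
  fin_cases i <;> fin_cases j <;> simp

end Matrix

theorem J₃_eq_single : J₃ = single 0 1 1 + single 1 2 1 := by
  ext i j
  fin_cases i <;> fin_cases j <;> simp [J₃]

section J₃Form

variable {m : Type*} [DecidableEq m]

def J₃Form (D : Matrix m m ℂ) : Matrix (m × Fin 3) (m × Fin 3) ℂ :=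
  1 + D ⊗ₖ J₃ + (D ⊗ₖ J₃)ᴴ

variable [Fintype m]

theorem J₃Form_eq_add_kronecker_single (D : Matrix m m ℂ) :
    J₃Form D
      = (1 ⊗ₖ single 0 0 1 + D ⊗ₖ single 0 1 1)ᴴ * (1 ⊗ₖ single 0 0 1 + D ⊗ₖ single 0 1 1)
        + (1 ⊗ₖ single 2 2 1 + Dᴴ ⊗ₖ single 2 1 1)ᴴ * (1 ⊗ₖ single 2 2 1 + Dᴴ ⊗ₖ single 2 1 1)
        + (1 - Dᴴ * D - D * Dᴴ) ⊗ₖ single 1 1 1 := by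
  rw [J₃Form, ← one_kronecker_one, one_fin_three_eq_sum_single, J₃_eq_single]
  simp only [conjTranspose_add, conjTranspose_kronecker, conjTranspose_single, conjTranspose_one,
    conjTranspose_conjTranspose, star_one, add_mul, mul_add, ← mul_kronecker_mul,
    single_mul_single_same, sub_kronecker, kronecker_add, one_mul, mul_one]
  abel

theorem conjTranspose_mul_J₃Form_mul (D : Matrix m m ℂ) :
    (1 ⊗ₖ single 1 1 1 - D ⊗ₖ single 0 1 1 - Dᴴ ⊗ₖ single 2 1 1)ᴴ * J₃Form D
        * (1 ⊗ₖ single 1 1 1 - D ⊗ₖ single 0 1 1 - Dᴴ ⊗ₖ single 2 1 1)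
      = (1 - Dᴴ * D - D * Dᴴ) ⊗ₖ single 1 1 1 := by
  rw [J₃Form, ← one_kronecker_one, J₃_eq_single]
  simp only [conjTranspose_add, conjTranspose_sub, conjTranspose_kronecker, conjTranspose_single,
    conjTranspose_one, conjTranspose_conjTranspose, star_one, add_mul, mul_add, sub_mul, mul_sub,
    ← mul_kronecker_mul, single_mul_single_same, single_mul_single_of_ne, ne_eq, Fin.reduceEq,
    not_false_eq_true, kronecker_zero, sub_kronecker, kronecker_add, one_mul, mul_one,
    Matrix.mul_assoc, Matrix.zero_mul]
  abel

theorem posSemidef_J₃Form_iff (D : Matrix m m ℂ) :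
    (J₃Form D).PosSemidef ↔ (1 - Dᴴ * D - D * Dᴴ).PosSemidef := by
  constructor
  · intro h
    have hY := h.conjTranspose_mul_mul_same
      (1 ⊗ₖ single 1 1 1 - D ⊗ₖ single 0 1 1 - Dᴴ ⊗ₖ single 2 1 1 : Matrix _ (m × Fin 3) ℂ)
    rw [conjTranspose_mul_J₃Form_mul] at hY
    simpa only [submatrix_kronecker_single_self] using hY.submatrix fun i => (i, (1 : Fin 3))
  · intro h
    rw [J₃Form_eq_add_kronecker_single]
    exact ((posSemidef_conjTranspose_mul_self _).add (posSemidef_conjTranspose_mul_self _)).add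
      (h.kronecker (posSemidef_single_one 1))

end J₃Form

section Hermitian

variable {m : Type*} {B₁ B₂ : Matrix m m ℂ}

theorem conjTranspose_half_smul_sub_I_smul (h₁ : B₁.IsHermitian) (h₂ : B₂.IsHermitian) :
    ((2 : ℂ)⁻¹ • (B₁ - Complex.I • B₂))ᴴ = (2 : ℂ)⁻¹ • (B₁ + Complex.I • B₂) := by
  simp [conjTranspose_smul, h₁.eq, h₂.eq, sub_eq_add_neg]

theorem J₃Form_half_smul_sub_I_smul [DecidableEq m] (h₁ : B₁.IsHermitian) (h₂ : B₂.IsHermitian) :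
    J₃Form ((2 : ℂ)⁻¹ • (B₁ - Complex.I • B₂))
      = 1 ⊗ₖ 1 + B₁ ⊗ₖ ((2 : ℂ)⁻¹ • (J₃ + J₃ᴴ)) + B₂ ⊗ₖ ((2 * Complex.I)⁻¹ • (J₃ - J₃ᴴ)) := by
  have hI : ((2 : ℂ) * Complex.I)⁻¹ = -(2 : ℂ)⁻¹ * Complex.I := by
    rw [mul_inv, Complex.inv_I]; ring
  rw [J₃Form, conjTranspose_kronecker, conjTranspose_half_smul_sub_I_smul h₁ h₂, one_kronecker_one,
    hI]
  simp only [kronecker_smul, smul_kronecker, kronecker_add, kronecker_sub, add_kronecker,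
    sub_kronecker, smul_sub, smul_add]
  module

theorem two_smul_one_sub_half_smul_sub_I_smul [Fintype m] [DecidableEq m] (h₁ : B₁.IsHermitian)
    (h₂ : B₂.IsHermitian) :
    (2 : ℂ) • (1 - ((2 : ℂ)⁻¹ • (B₁ - Complex.I • B₂))ᴴ * ((2 : ℂ)⁻¹ • (B₁ - Complex.I • B₂))
        - ((2 : ℂ)⁻¹ • (B₁ - Complex.I • B₂)) * ((2 : ℂ)⁻¹ • (B₁ - Complex.I • B₂))ᴴ)
      = (2 : ℂ) • 1 - (B₁ * B₁ + B₂ * B₂) := by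
  rw [conjTranspose_half_smul_sub_I_smul h₁ h₂]
  simp only [smul_mul_assoc, mul_smul_comm, sub_mul, mul_sub, add_mul, mul_add, smul_sub, smul_add,
    smul_smul]
  match_scalars <;> simp [Complex.ext_iff] <;> ring

end Hermitian

theorem selfadjoint_structure_J3 {n : ℕ} (B₁ B₂ : Matrix (Fin n) (Fin n) ℂ)
    (h₁ : B₁.IsHermitian) (h₂ : B₂.IsHermitian) :
    ((1 : Matrix (Fin n) (Fin n) ℂ) ⊗ₖ (1 : Matrix (Fin 3) (Fin 3) ℂ)
        + B₁ ⊗ₖ ((2 : ℂ)⁻¹ • (J₃ + J₃ᴴ))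
        + B₂ ⊗ₖ ((2 * Complex.I)⁻¹ • (J₃ - J₃ᴴ))).PosSemidef ↔
      ((2 : ℂ) • (1 : Matrix (Fin n) (Fin n) ℂ) - (B₁ * B₁ + B₂ * B₂)).PosSemidef := by
  rw [← J₃Form_half_smul_sub_I_smul h₁ h₂, ← two_smul_one_sub_half_smul_sub_I_smul h₁ h₂,
    posSemidef_smul_iff two_pos]
  exact posSemidef_J₃Form_iff _
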